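/- arXiv:1403.7602 — 5 statements merged into one kernel-verified Lean document; each statement's English description precedes it below -/
import Mathlib

section
/- If G is a finite group in which every Cayley graph Cay(G,S) with |S| ≤ 2 is integral (i.e., all eigenvalues of its adjacency matrix are integers), then every non-identity element of G has order 2, 3, 4, or 6. -/
/-- The Cayley graph of a group `G` with connection set `S`. For a symmetric set `S`
with `1 ∉ S`, `g` and `h` are adjacent iff `h * g⁻¹ ∈ S`. -/
def cayley {G : Type*} [Group G] (S : Set G) : SimpleGraph G :=
  SimpleGraph.fromRel (fun g h => h * g⁻¹ ∈ S)

/-- A finite graph is integral if all eigenvalues of its adjacency matrix are integers. -/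
def IsIntegralGraph {V : Type*} [Finite V] (Γ : SimpleGraph V) : Prop :=
  letI := Fintype.ofFinite V
  letI := Classical.decEq V
  letI : DecidableRel Γ.Adj := Classical.decRel _
  ∀ μ ∈ spectrum ℝ (Γ.adjMatrix ℝ), ∃ z : ℤ, (z : ℝ) = μ


/-! For `g ≠ g⁻¹`, the graph `Cay(G, {g, g⁻¹})` is a disjoint union of cycles of length
`n = orderOf g` (one on each coset of `⟨g⟩`), and `g ^ k ↦ cos (2πk / n)`, extended by zero,
is an eigenvector for `2 cos (2π / n)`. That number lies in `(0, 2)` once `n ≥ 5`, so it is an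
integer only if it equals `1`, i.e. `n = 6`. -/

open Real
open scoped Matrix

lemma Matrix.mem_spectrum_of_mulVec_eq {n R : Type*} [Fintype n] [DecidableEq n] [CommRing R]
    {A : Matrix n n R} {μ : R} {v : n → R} (hv : v ≠ 0) (h : A *ᵥ v = μ • v) :
    μ ∈ spectrum R A := by
  rw [← Matrix.spectrum_toLin']
  refine (Module.End.hasEigenvalue_of_hasEigenvector (x := v) ?_).mem_spectrum
  exact Module.End.hasEigenvector_iff.mpr ⟨by simpa [Matrix.toLin'_apply] using h, hv⟩

lemma IsIntegralGraph.exists_int_eq {V : Type*} [Fintype V] [DecidableEq V] {Γ : SimpleGraph V}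
    [DecidableRel Γ.Adj] (hΓ : IsIntegralGraph Γ) {μ : ℝ} (hμ : μ ∈ spectrum ℝ (Γ.adjMatrix ℝ)) :
    ∃ z : ℤ, (z : ℝ) = μ := by
  unfold IsIntegralGraph at hΓ
  exact hΓ μ (by convert hμ)

section Cayley

variable {G : Type*} [Group G]

lemma cayley_adj_iff {S : Set G} (h1 : (1 : G) ∉ S) (hS : ∀ s ∈ S, s⁻¹ ∈ S) {x y : G} :
    (cayley S).Adj x y ↔ y * x⁻¹ ∈ S := by
  refine ⟨fun ⟨_, h⟩ => h.elim id fun h => by simpa using hS _ h, fun h => ⟨?_, .inl h⟩⟩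
  rintro rfl
  exact h1 (by simpa using h)

lemma cayley_neighborFinset_eq [Fintype G] [DecidableEq G] {S : Finset G} (h1 : (1 : G) ∉ S)
    (hS : ∀ s ∈ S, s⁻¹ ∈ S) [DecidableRel (cayley (S : Set G)).Adj] (x : G) :
    (cayley (S : Set G)).neighborFinset x = S.image (· * x) := by
  ext y
  simp [cayley_adj_iff (S := (S : Set G)) h1 hS]

lemma cayley_adjMatrix_mulVec_apply [Fintype G] [DecidableEq G] {S : Finset G} (h1 : (1 : G) ∉ S)
    (hS : ∀ s ∈ S, s⁻¹ ∈ S) [DecidableRel (cayley (S : Set G)).Adj] (v : G → ℝ) (x : G) :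
    ((cayley (S : Set G)).adjMatrix ℝ *ᵥ v) x = ∑ s ∈ S, v (s * x) := by
  rw [SimpleGraph.adjMatrix_mulVec_apply, cayley_neighborFinset_eq h1 hS,
    Finset.sum_image fun _ _ _ _ h => mul_right_cancel h]

end Cayley

section CyclicCosine

variable {G : Type*} [Group G]

lemma cos_two_pi_mul_div_orderOf_congr {g : G} {a b : ℤ} (h : g ^ a = g ^ b) :
    cos (2 * π * a / orderOf g) = cos (2 * π * b / orderOf g) := by
  obtain ⟨m, hm⟩ := orderOf_dvd_iff_zpow_eq_one.mpr
    (show g ^ (a - b) = 1 by rw [zpow_sub, h, mul_inv_cancel])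
  rcases eq_or_ne (orderOf g) 0 with h0 | h0
  · simp [h0]
  have ha : (a : ℝ) = b + m * orderOf g := by
    have := congrArg (Int.cast : ℤ → ℝ) hm
    push_cast at this
    linarith
  rw [ha, ← cos_add_int_mul_two_pi (2 * π * b / orderOf g) m]
  congr 1
  field_simp

noncomputable def cyclicCosine (g x : G) : ℝ :=
  if h : x ∈ Subgroup.zpowers g then
    cos (2 * π * (Subgroup.mem_zpowers_iff.mp h).choose / orderOf g)
  else 0

lemma cyclicCosine_zpow (g : G) (k : ℤ) :
    cyclicCosine g (g ^ k) = cos (2 * π * k / orderOf g) := by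
  have h : g ^ k ∈ Subgroup.zpowers g := zpow_mem (Subgroup.mem_zpowers g) k
  rw [cyclicCosine, dif_pos h]
  exact cos_two_pi_mul_div_orderOf_congr (Subgroup.mem_zpowers_iff.mp h).choose_spec

lemma cyclicCosine_of_notMem {g x : G} (hx : x ∉ Subgroup.zpowers g) : cyclicCosine g x = 0 :=
  dif_neg hx

lemma cyclicCosine_one (g : G) : cyclicCosine g 1 = 1 := by
  simpa using cyclicCosine_zpow g 0

lemma cyclicCosine_mul_add_inv_mul (g x : G) :
    cyclicCosine g (g * x) + cyclicCosine g (g⁻¹ * x) =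
      2 * cos (2 * π / orderOf g) * cyclicCosine g x := by
  by_cases hx : x ∈ Subgroup.zpowers g
  · obtain ⟨k, rfl⟩ := Subgroup.mem_zpowers_iff.mp hx
    rw [← zpow_one_add, ← zpow_neg_one, ← zpow_add, cyclicCosine_zpow, cyclicCosine_zpow,
      cyclicCosine_zpow]
    have hsum : ∀ j : ℤ, 2 * π * ((j + k : ℤ) : ℝ) / orderOf g =
        2 * π * k / orderOf g + j * (2 * π / orderOf g) := fun j => by push_cast; ring
    rw [hsum, hsum]
    push_cast
    rw [cos_add, cos_add]
    simp only [one_mul, neg_one_mul, cos_neg, sin_neg]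
    ring
  · have hgx : g * x ∉ Subgroup.zpowers g := by
      rwa [Subgroup.mul_mem_cancel_left _ (Subgroup.mem_zpowers g)]
    have hgx' : g⁻¹ * x ∉ Subgroup.zpowers g := by
      rwa [Subgroup.mul_mem_cancel_left _ (inv_mem (Subgroup.mem_zpowers g))]
    simp [cyclicCosine_of_notMem, hx, hgx, hgx']

end CyclicCosine

theorem two_mul_cos_mem_spectrum_cayley {G : Type*} [Group G] [Fintype G] [DecidableEq G]
    {g : G} (hg : g ≠ 1) (hg' : g⁻¹ ≠ g)
    [DecidableRel (cayley (({g, g⁻¹} : Finset G) : Set G)).Adj] :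
    2 * cos (2 * π / orderOf g) ∈
      spectrum ℝ ((cayley (({g, g⁻¹} : Finset G) : Set G)).adjMatrix ℝ) := by
  have h1 : (1 : G) ∉ ({g, g⁻¹} : Finset G) := by simp [eq_comm (a := (1 : G)), hg]
  have hS : ∀ s ∈ ({g, g⁻¹} : Finset G), s⁻¹ ∈ ({g, g⁻¹} : Finset G) := by simp [or_comm]
  refine Matrix.mem_spectrum_of_mulVec_eq (v := cyclicCosine g) ?_ ?_
  · exact fun h => by simpa [cyclicCosine_one] using congrFun h 1
  · funext x
    rw [cayley_adjMatrix_mulVec_apply h1 hS, Finset.sum_pair hg'.symm]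
    exact cyclicCosine_mul_add_inv_mul g x

lemma mem_of_two_mul_cos_two_pi_div_eq_int {n : ℕ} (hn : 0 < n) {z : ℤ}
    (hz : (z : ℝ) = 2 * cos (2 * π / n)) : n ∈ ({1, 2, 3, 4, 6} : Set ℕ) := by
  by_contra hmem
  simp only [Set.mem_insert_iff, Set.mem_singleton_iff] at hmem
  have hn5 : (5 : ℝ) ≤ n := by exact_mod_cast (show 5 ≤ n by omega)
  have hn6 : (n : ℝ) ≠ 6 := by exact_mod_cast (show n ≠ 6 by omega)
  have hpos : 0 < 2 * π / n := by positivity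
  have hle : 2 * π / n ≤ 2 * π / 5 := div_le_div_of_nonneg_left (by positivity) (by norm_num) hn5
  have hcos_pos : 0 < cos (2 * π / n) := cos_pos_of_mem_Ioo ⟨by linarith, by linarith [pi_pos]⟩
  have hcos_lt : cos (2 * π / n) < 1 := by
    simpa using strictAntiOn_cos (Set.left_mem_Icc.mpr pi_pos.le)
      ⟨hpos.le, by linarith [pi_pos]⟩ hpos
  have hz1 : z = 1 := by
    have hz0 : (0 : ℤ) < z := by exact_mod_cast (by linarith : (0 : ℝ) < z)
    have hz2 : z < 2 := by exact_mod_cast (by linarith : (z : ℝ) < 2)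
    omega
  have hcos : cos (2 * π / n) = cos (π / 3) := by
    rw [cos_pi_div_three]
    rw [hz1] at hz
    push_cast at hz
    linarith
  have := injOn_cos ⟨hpos.le, by linarith [pi_pos]⟩ ⟨by positivity, by linarith [pi_pos]⟩ hcos
  field_simp at this
  exact hn6 (by nlinarith [pi_pos])

theorem orders_of_G2_groups (G : Type*) [Group G] [Finite G]
    (hG : ∀ S : Finset G, (1 : G) ∉ S → (∀ s ∈ S, s⁻¹ ∈ S) → S.card ≤ 2 →
      IsIntegralGraph (cayley (S : Set G))) :
    ∀ g : G, g ≠ 1 → orderOf g ∈ ({2, 3, 4, 6} : Set ℕ) := by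
  classical
  have := Fintype.ofFinite G
  intro g hg
  by_cases hg' : g⁻¹ = g
  · exact Or.inl (orderOf_eq_prime (by rw [sq]; nth_rw 1 [← hg']; exact inv_mul_cancel g) hg)
  have hint := hG {g, g⁻¹} (by simp [eq_comm (a := (1 : G)), hg]) (by simp [or_comm])
    Finset.card_le_two
  obtain ⟨z, hz⟩ := hint.exists_int_eq (two_mul_cos_mem_spectrum_cayley hg hg')
  have hord := mem_of_two_mul_cos_two_pi_div_eq_int (orderOf_pos g) hz
  have hord1 : orderOf g ≠ 1 := by simpa using hg
  simpa [hord1] using hord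
end

section
/- If G is a finite group such that every Cayley graph Cay(G,S) with |S| ≤ k is integral, and H is a subgroup of G, then every Cayley graph Cay(H,T) with |T| ≤ k is integral. -/
/-- `μ` is an eigenvalue of the adjacency matrix of the finite graph `Γ`. -/
def IsAdjEigenvalue {V : Type*} [Finite V] (Γ : SimpleGraph V) (μ : ℝ) : Prop :=
  letI := Fintype.ofFinite V
  letI := Classical.decEq V
  letI : DecidableRel Γ.Adj := Classical.decRel _
  μ ∈ spectrum ℝ (Γ.adjMatrix ℝ)

open Matrix Module.End in
theorem Matrix.mem_spectrum_iff_exists_mulVec_eq_smul {K n : Type*} [Field K] [Fintype n]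
    [DecidableEq n] (A : Matrix n n K) (μ : K) :
    μ ∈ spectrum K A ↔ ∃ v : n → K, v ≠ 0 ∧ A *ᵥ v = μ • v := by
  rw [← spectrum_toLin', ← hasEigenvalue_iff_mem_spectrum, hasEigenvalue_iff,
    Submodule.ne_bot_iff]
  simp only [mem_eigenspace_iff, toLin'_apply, and_comm]

namespace SimpleGraph

open Matrix

variable {V W : Type*} [Fintype V] [Fintype W]
  {Γ : SimpleGraph V} {Γ' : SimpleGraph W} [DecidableRel Γ.Adj] [DecidableRel Γ'.Adj]

theorem Embedding.neighborFinset_map (f : Γ ↪g Γ')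
    (hclosed : ∀ a w, Γ'.Adj (f a) w → w ∈ Set.range f) (a : V) :
    Γ'.neighborFinset (f a) = (Γ.neighborFinset a).map f.toEmbedding := by
  ext w
  simp only [mem_neighborFinset, Finset.mem_map, RelEmbedding.coe_toEmbedding]
  constructor
  · intro hw
    obtain ⟨b, rfl⟩ := hclosed a w hw
    exact ⟨b, f.map_adj_iff.mp hw, rfl⟩
  · rintro ⟨b, hb, rfl⟩
    exact f.map_adj_iff.mpr hb

theorem Embedding.adjMatrix_mulVec_extend_zero {K : Type*} [NonAssocSemiring K] (f : Γ ↪g Γ')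
    (hclosed : ∀ a w, Γ'.Adj (f a) w → w ∈ Set.range f) (v : V → K) :
    Γ'.adjMatrix K *ᵥ Function.extend f v 0 = Function.extend f (Γ.adjMatrix K *ᵥ v) 0 := by
  funext w
  by_cases hw : ∃ a, f a = w
  · obtain ⟨a, rfl⟩ := hw
    simp only [adjMatrix_mulVec_apply, f.injective.extend_apply, f.neighborFinset_map hclosed,
      Finset.sum_map, RelEmbedding.coe_toEmbedding]
  · rw [Function.extend_apply' _ _ _ hw, adjMatrix_mulVec_apply]
    refine Finset.sum_eq_zero fun u hu => Function.extend_apply' _ _ _ ?_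
    rintro ⟨a, rfl⟩
    obtain ⟨b, rfl⟩ := hclosed a w ((mem_neighborFinset _ _ _).mp hu).symm
    exact hw ⟨b, rfl⟩

theorem Embedding.spectrum_adjMatrix_subset [DecidableEq V] [DecidableEq W] {K : Type*} [Field K]
    (f : Γ ↪g Γ')
    (hclosed : ∀ a w, Γ'.Adj (f a) w → w ∈ Set.range f) :
    spectrum K (Γ.adjMatrix K) ⊆ spectrum K (Γ'.adjMatrix K) := by
  intro μ hμ
  rw [Matrix.mem_spectrum_iff_exists_mulVec_eq_smul] at hμ ⊢
  obtain ⟨v, hv0, hv⟩ := hμ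
  refine ⟨Function.extend f v 0, fun h => hv0 (funext fun a => ?_), ?_⟩
  · simpa [f.injective.extend_apply] using congrFun h (f a)
  · rw [f.adjMatrix_mulVec_extend_zero hclosed, hv, ← Function.extend_smul, smul_zero]

end SimpleGraph

theorem isIntegralGraph_iff {V : Type*} [Fintype V] [DecidableEq V] {Γ : SimpleGraph V}
    [DecidableRel Γ.Adj] :
    IsIntegralGraph Γ ↔ ∀ μ ∈ spectrum ℝ (Γ.adjMatrix ℝ), ∃ z : ℤ, (z : ℝ) = μ := by
  unfold IsIntegralGraph
  convert Iff.rfl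

theorem IsIntegralGraph.of_embedding {V W : Type*} [Finite V] [Finite W] {Γ : SimpleGraph V}
    {Γ' : SimpleGraph W} (f : Γ ↪g Γ') (hclosed : ∀ a w, Γ'.Adj (f a) w → w ∈ Set.range f)
    (h : IsIntegralGraph Γ') : IsIntegralGraph Γ := by
  classical
  have := Fintype.ofFinite V
  have := Fintype.ofFinite W
  rw [isIntegralGraph_iff] at h ⊢
  intro μ hμ
  exact h μ (f.spectrum_adjMatrix_subset hclosed hμ)

section Cayley

variable {G : Type*} [Group G]

theorem cayley_adj {S : Set G} {g h : G} :
    (cayley S).Adj g h ↔ g ≠ h ∧ (h * g⁻¹ ∈ S ∨ g * h⁻¹ ∈ S) :=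
  SimpleGraph.fromRel_adj _ _ _

theorem Subgroup.mem_of_cayley_adj {H : Subgroup G} {S : Set G} (hS : S ⊆ H) {g h : G}
    (hadj : (cayley S).Adj g h) (hg : g ∈ H) : h ∈ H := by
  rcases (cayley_adj.mp hadj).2 with hs | hs
  · exact (H.mul_mem_cancel_right (H.inv_mem hg)).mp (hS hs)
  · exact H.inv_mem_iff.mp ((H.mul_mem_cancel_left hg).mp (hS hs))

def Subgroup.cayleyEmbedding (H : Subgroup G) (T : Set H) :
    cayley T ↪g cayley (Subtype.val '' T : Set G) where
  toEmbedding := Function.Embedding.subtype _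
  map_rel_iff' := by
    intro a b
    simp only [Function.Embedding.subtype_apply, cayley_adj, ← Subgroup.coe_inv,
      ← Subgroup.coe_mul, Subtype.val_injective.mem_set_image, Subtype.val_injective.ne_iff]

theorem Subgroup.mem_range_cayleyEmbedding_of_adj (H : Subgroup G) {T : Set H} {a : H} {w : G}
    (hadj : (cayley (Subtype.val '' T : Set G)).Adj (H.cayleyEmbedding T a) w) :
    w ∈ Set.range (H.cayleyEmbedding T) :=
  ⟨⟨w, H.mem_of_cayley_adj (Subtype.coe_image_subset _ T) hadj a.2⟩, rfl⟩

end Cayley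

theorem subgroup_inherits (G : Type*) [Group G] [Finite G] (k : ℕ)
    (hG : ∀ S : Finset G, (1 : G) ∉ S → (∀ s ∈ S, s⁻¹ ∈ S) → S.card ≤ k →
      IsIntegralGraph (cayley (S : Set G)))
    (H : Subgroup G) :
    ∀ T : Finset H, (1 : H) ∉ T → (∀ t ∈ T, t⁻¹ ∈ T) → T.card ≤ k →
      IsIntegralGraph (cayley (T : Set H)) := by
  intro T hT1 hTinv hTk
  set S := T.map (Function.Embedding.subtype (· ∈ H))
  have hS1 : (1 : G) ∉ S := by simpa [S] using hT1
  have hSinv : ∀ s ∈ S, s⁻¹ ∈ S :=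
    Finset.forall_mem_map.mpr fun t ht => Finset.mem_map_of_mem _ (hTinv t ht)
  have hSk : S.card ≤ k := by rwa [Finset.card_map]
  have hS : (S : Set G) = Subtype.val '' (T : Set H) := Finset.coe_map _ T
  exact IsIntegralGraph.of_embedding (H.cayleyEmbedding T)
    (fun _ _ => H.mem_range_cayleyEmbedding_of_adj) (hS ▸ hG S hS1 hSinv hSk)
end

section
/- Every Cayley graph over the generalized dicyclic group Dic(E_{3ⁿ} × ℤ₆) with connection set of size at most 5 is integral. -/
/-!
The adjacency matrix of `Cay(G, S)` is the image of `∑ s ∈ S, s` under the regular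
representation, so it suffices that this element is annihilated by a product of distinct factors
`X - t`, `t ∈ ℤ`. This property passes to sums of commuting elements (via the Lagrange
idempotents of both summands).

Write `y = x ^ 2` and split `S` into `S ∩ A` and the rest `O`. The elements of `A` commute and have
order dividing `6`, and for such `g` the element `g + g⁻¹` has eigenvalues among `±1, ±2`.
Every `s ∈ O` inverts `A`, so it commutes with `∑ (S ∩ A)`, and `s⁻¹ = s y`; hence
`∑ O = m (1 + y)`, where `m` sums one element of each pair `{s, s⁻¹}`. As `#O ≤ 5`, `m` has at
most two terms, and choosing them in `A₃ x`, with `A₃` the `3`-part of `A`, gives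
`m ^ 2 = (e + 2) y` with `e = b + b⁻¹`, `b ^ 3 = 1`. So `m ^ 2 y` has eigenvalues among `1, 4`
and, `(1 + y) / 2` being idempotent, `m (1 + y)` has eigenvalues among `0, ±2, ±4`.
-/

open Polynomial Finset Pointwise

section IntDiagonalizable

variable (K : Type*) {R : Type*} [Field K] [Ring R] [Algebra K R]

def IsIntDiagonalizable (a : R) : Prop :=
  ∃ T : Finset ℤ, aeval a (∏ t ∈ T, (X - C (t : K))) = 0

variable {K}

theorem isIntDiagonalizable_of_sum_eq_one {ι : Type*} (s : Finset ι) (e : ι → R) (eig : ι → ℤ)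
    {c : R} (he : ∑ i ∈ s, e i = 1) (hc : ∀ i ∈ s, e i * (c - eig i) = 0) :
    IsIntDiagonalizable K c := by
  classical
  refine ⟨s.image eig, ?_⟩
  rw [← one_mul (aeval c _), ← he, sum_mul]
  refine sum_eq_zero fun i hi => ?_
  rw [← mul_prod_erase _ _ (mem_image_of_mem eig hi), map_mul, ← mul_assoc]
  simp [hc i hi]

theorem Commute.aeval_left {a b : R} (hab : Commute a b) (p : K[X]) : Commute (aeval a p) b := by
  have : aeval a p ∈ Subalgebra.centralizer K {b} :=
    Algebra.adjoin_le (by simpa [Set.mem_centralizer_iff] using hab.symm.eq)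
      (aeval_mem_adjoin_singleton K a)
  exact (Subalgebra.mem_centralizer_iff K |>.mp this b rfl).symm

theorem isIntDiagonalizable_zero : IsIntDiagonalizable K (0 : R) := ⟨{0}, by simp⟩

theorem isIntDiagonalizable_of_sq_eq_one {c : R} (h : c ^ 2 = 1) : IsIntDiagonalizable K c := by
  refine ⟨{-1, 1}, ?_⟩
  have : ∏ t ∈ ({-1, 1} : Finset ℤ), (X - C (t : K)) = X ^ 2 - 1 := by
    simp [prod_insert]; ring
  rw [this]
  simp [h]

theorem isIntDiagonalizable_of_sq_sub_two_sq {c : R} (h : (c ^ 2 - 2) ^ 2 = c ^ 2) :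
    IsIntDiagonalizable K c := by
  refine ⟨{-2, -1, 1, 2}, ?_⟩
  have : ∏ t ∈ ({-2, -1, 1, 2} : Finset ℤ), (X - C (t : K)) = (X ^ 2 - 2) ^ 2 - X ^ 2 := by
    simp [prod_insert]; ring
  rw [this]
  simp [map_ofNat, h]

theorem isIntDiagonalizable_mul_one_add {m y e : R} (hy : y ^ 2 = 1) (hmy : Commute m y)
    (hm : m ^ 2 = (e + 2) * y) (he : e ^ 2 = e + 2) : IsIntDiagonalizable K (m * (1 + y)) := by
  have hη : (1 + y) ^ 2 = 2 * (1 + y) := by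
    calc (1 + y) ^ 2 = 1 + 2 * y + y ^ 2 := by noncomm_ring
      _ = 2 * (1 + y) := by rw [hy]; noncomm_ring
  have hmη : Commute m (1 + y) := (Commute.one_right m).add_right hmy
  have hW2 : (m * (1 + y)) ^ 2 = 2 * (e + 2) * (1 + y) := by
    calc (m * (1 + y)) ^ 2 = (e + 2) * y * (2 * (1 + y)) := by rw [hmη.mul_pow, hm, hη]
      _ = 2 * (e + 2) * (y + y ^ 2) := by noncomm_ring
      _ = 2 * (e + 2) * (1 + y) := by rw [hy, add_comm y 1]
  have hW3 : (m * (1 + y)) ^ 3 = 4 * (e + 2) * (m * (1 + y)) := by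
    calc (m * (1 + y)) ^ 3 = 2 * (e + 2) * ((1 + y) * m) * (1 + y) := by
          rw [pow_succ, hW2]; noncomm_ring
      _ = 2 * (e + 2) * m * (1 + y) ^ 2 := by rw [← hmη.eq]; noncomm_ring
      _ = 4 * (e + 2) * (m * (1 + y)) := by rw [hη]; noncomm_ring
  set W := m * (1 + y)
  refine ⟨{-4, -2, 0, 2, 4}, ?_⟩
  have : ∏ t ∈ ({-4, -2, 0, 2, 4} : Finset ℤ), (X - C (t : K)) =
      (X ^ 3 - 4 * X) * (X ^ 2 - 16) := by
    simp [prod_insert]; ring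
  rw [this]
  calc aeval W ((X ^ 3 - 4 * X) * (X ^ 2 - 16) : K[X])
      = 4 * ((e + 2) * W - W) * (W ^ 2 - 16) := by simp [map_ofNat, hW3]; noncomm_ring
    _ = 4 * ((e + 1) * (W ^ 3 - 16 * W)) := by noncomm_ring
    _ = 16 * ((e + 1) * ((e + 2) * W - 4 * W)) := by rw [hW3]; noncomm_ring
    _ = 16 * ((e ^ 2 - (e + 2)) * W) := by noncomm_ring
    _ = 0 := by rw [he, sub_self, zero_mul, mul_zero]

theorem IsIntDiagonalizable.exists_intCast_eq [Nontrivial R] {a : R}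
    (ha : IsIntDiagonalizable K a) {μ : K} (hμ : μ ∈ spectrum K a) : ∃ z : ℤ, (z : K) = μ := by
  obtain ⟨T, hT⟩ := ha
  have h := spectrum.subset_polynomial_aeval a (∏ t ∈ T, (X - C (t : K))) ⟨μ, hμ, rfl⟩
  rw [hT, spectrum.zero_eq, Set.mem_singleton_iff] at h
  simp only [eval_prod, eval_sub, eval_X, eval_C, prod_eq_zero_iff, sub_eq_zero] at h
  obtain ⟨t, -, ht⟩ := h
  exact ⟨t, ht.symm⟩

variable [CharZero K]

theorem IsIntDiagonalizable.exists_sum_eq_one {a : R} (ha : IsIntDiagonalizable K a) :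
    ∃ (T : Finset ℤ) (e : ℤ → R), ∑ t ∈ T, e t = 1 ∧ (∀ t ∈ T, e t * (a - t) = 0) ∧
      ∀ t b, Commute a b → Commute (e t) b := by
  classical
  obtain ⟨T, hT⟩ := ha
  set v : ℤ → K := fun t => t
  have hinj : Set.InjOn v T := fun s _ t _ h => Int.cast_injective h
  refine ⟨T, fun t => aeval a (Lagrange.basis T v t), ?_, fun t ht => ?_,
    fun t b hab => hab.aeval_left _⟩
  · rcases T.eq_empty_or_nonempty with rfl | hne
    · simpa [eq_comm] using hT
    · rw [← map_sum, Lagrange.sum_basis hinj hne, map_one]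
  · have hnodal : Lagrange.basis T v t * (X - C (v t)) =
        C (Lagrange.nodalWeight T v t) * Lagrange.nodal T v := by
      rw [Lagrange.basis_eq_prod_sub_inv_mul_nodal_div ht, ← Lagrange.nodal_erase_eq_nodal_div ht,
        Lagrange.nodal_eq_mul_nodal_erase ht]
      ring
    have := congrArg (aeval a) hnodal
    rw [map_mul, map_mul, Lagrange.nodal_eq, hT, mul_zero] at this
    simpa [v] using this

theorem IsIntDiagonalizable.add {a b : R} (hab : Commute a b) (ha : IsIntDiagonalizable K a)
    (hb : IsIntDiagonalizable K b) : IsIntDiagonalizable K (a + b) := by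
  obtain ⟨T, e, he, hea, hec⟩ := ha.exists_sum_eq_one
  obtain ⟨U, f, hf, hfb, hfc⟩ := hb.exists_sum_eq_one
  refine isIntDiagonalizable_of_sum_eq_one (T ×ˢ U) (fun p => e p.1 * f p.2) (fun p => p.1 + p.2)
    (by rw [sum_product, ← sum_mul_sum, he, hf, one_mul]) ?_
  rintro ⟨t, u⟩ htu
  obtain ⟨ht, hu⟩ := mem_product.mp htu
  have hfa : Commute (f u) (a - t) := (hfc u a hab.symm).sub_right (Int.cast_commute t (f u)).symm
  calc e t * f u * (a + b - ↑(t + u))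
      = e t * (f u * (a - t)) + e t * (f u * (b - u)) := by push_cast; noncomm_ring
    _ = 0 := by rw [hfa.eq, ← mul_assoc, hea t ht, hfb u hu]; simp

end IntDiagonalizable

section Representation

variable {K R G : Type*} [Field K] [Ring R] [Algebra K R] [Group G] (ρ : G →* R)

theorem map_add_map_inv_sq (g : G) : (ρ g + ρ g⁻¹) ^ 2 = ρ (g ^ 2) + ρ (g ^ 2)⁻¹ + 2 := by
  have h₁ : ρ g * ρ g⁻¹ = 1 := by rw [← map_mul, mul_inv_cancel, map_one]
  have h₂ : ρ g⁻¹ * ρ g = 1 := by rw [← map_mul, inv_mul_cancel, map_one]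
  calc (ρ g + ρ g⁻¹) ^ 2 = ρ g ^ 2 + ρ g⁻¹ ^ 2 + (ρ g * ρ g⁻¹ + ρ g⁻¹ * ρ g) := by noncomm_ring
    _ = ρ (g ^ 2) + ρ (g ^ 2)⁻¹ + 2 := by
      rw [h₁, h₂, ← map_pow, ← map_pow, inv_pow, one_add_one_eq_two]

theorem map_add_map_inv_sq_of_pow_three {g : G} (hg : g ^ 3 = 1) :
    (ρ g + ρ g⁻¹) ^ 2 = ρ g + ρ g⁻¹ + 2 := by
  have : g ^ 2 = g⁻¹ := eq_inv_of_mul_eq_one_left (by rw [← pow_succ, hg])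
  rw [map_add_map_inv_sq, this, inv_inv, add_comm (ρ g⁻¹)]

theorem isIntDiagonalizable_map_of_sq_eq_one {g : G} (hg : g ^ 2 = 1) :
    IsIntDiagonalizable K (ρ g) :=
  isIntDiagonalizable_of_sq_eq_one (by rw [← map_pow, hg, map_one])

theorem isIntDiagonalizable_map_add_map_inv {g : G} (hg : g ^ 6 = 1) :
    IsIntDiagonalizable K (ρ g + ρ g⁻¹) := by
  have : (g ^ 2) ^ 2 = (g ^ 2)⁻¹ := eq_inv_of_mul_eq_one_left (by rw [← pow_succ, ← pow_mul, hg])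
  apply isIntDiagonalizable_of_sq_sub_two_sq
  rw [map_add_map_inv_sq, add_sub_cancel_right, map_add_map_inv_sq, this, inv_inv,
    add_comm (ρ (g ^ 2)⁻¹)]

theorem commute_map_sum_of_conj_eq_inv {g : G} {T : Finset G} (hT : ∀ t ∈ T, t⁻¹ ∈ T)
    (hg : ∀ t ∈ T, g * t * g⁻¹ = t⁻¹) : Commute (ρ g) (∑ t ∈ T, ρ t) := by
  have hinv : ∑ t ∈ T, ρ t⁻¹ = ∑ t ∈ T, ρ t :=
    sum_nbij' (·⁻¹) (·⁻¹) hT hT (fun t _ => inv_inv t) (fun t _ => inv_inv t) (fun t _ => by simp)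
  rw [Commute, SemiconjBy, mul_sum, ← hinv, sum_mul]
  refine sum_congr rfl fun t ht => ?_
  rw [← map_mul, ← map_mul, ← hg t ht, inv_mul_cancel_right]

variable [CharZero K]

theorem isIntDiagonalizable_sum_of_pow_six (T : Finset G) (hT : ∀ g ∈ T, g⁻¹ ∈ T)
    (hcomm : ∀ g ∈ T, ∀ h ∈ T, Commute g h) (h6 : ∀ g ∈ T, g ^ 6 = 1) :
    IsIntDiagonalizable K (∑ g ∈ T, ρ g) := by
  classical
  induction T using Finset.strongInduction with
  | H T ih =>
  rcases T.eq_empty_or_nonempty with rfl | ⟨g, hg⟩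
  · simpa using isIntDiagonalizable_zero
  have hpair : {g, g⁻¹} ⊆ T := insert_subset hg (singleton_subset_iff.2 (hT g hg))
  rw [← sum_sdiff hpair]
  refine IsIntDiagonalizable.add ?_
    (ih _ (sdiff_ssubset hpair ⟨g, mem_insert_self _ _⟩) ?_ ?_ ?_) ?_
  · exact Commute.sum_left _ _ _ fun a ha => Commute.sum_right _ _ _ fun b hb =>
      (hcomm a (mem_sdiff.1 ha).1 b (hpair hb)).map ρ
  · intro a ha
    simp only [mem_sdiff, mem_insert, mem_singleton, inv_eq_iff_eq_inv, inv_inv] at ha ⊢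
    exact ⟨hT a ha.1, by tauto⟩
  · exact fun a ha b hb => hcomm a (mem_sdiff.1 ha).1 b (mem_sdiff.1 hb).1
  · exact fun a ha => h6 a (mem_sdiff.1 ha).1
  · by_cases hgg : g⁻¹ = g
    · rw [hgg, pair_eq_singleton, sum_singleton]
      exact isIntDiagonalizable_map_of_sq_eq_one ρ (by rw [sq, mul_eq_one_iff_eq_inv, hgg])
    · rw [sum_pair (Ne.symm hgg)]
      exact isIntDiagonalizable_map_add_map_inv ρ (h6 g hg)

end Representation

/-- `G = Dic(A) = A ∪ A x`, with `x ^ 2` the unique involution of `A`. -/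
structure IsGenDicyclic {G : Type*} [Group G] (A : Subgroup G) (x : G) : Prop where
  commute : ∀ a ∈ A, ∀ b ∈ A, Commute a b
  sq_mem : x ^ 2 ∈ A
  sq_ne_one : x ^ 2 ≠ 1
  eq_one_or_eq_sq : ∀ a ∈ A, a ^ 2 = 1 → a = 1 ∨ a = x ^ 2
  inv_mul_mul : ∀ a ∈ A, x⁻¹ * a * x = a⁻¹
  mem_or_mul_inv_mem : ∀ g, g ∈ A ∨ g * x⁻¹ ∈ A

namespace IsGenDicyclic

variable {G : Type*} [Group G] {A : Subgroup G} {x : G}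

theorem mul_mul_inv (hD : IsGenDicyclic A x) {a : G} (ha : a ∈ A) : x * a * x⁻¹ = a⁻¹ := by
  have h := hD.inv_mul_mul a⁻¹ (inv_mem ha)
  rw [inv_inv] at h
  calc x * a * x⁻¹ = x * (x⁻¹ * a⁻¹ * x) * x⁻¹ := by rw [h]
    _ = a⁻¹ := by group

theorem sq_sq (hD : IsGenDicyclic A x) : (x ^ 2) ^ 2 = 1 := by
  have h := hD.inv_mul_mul _ hD.sq_mem
  rw [show x⁻¹ * x ^ 2 * x = x ^ 2 by group] at h
  rw [sq, mul_eq_one_iff_eq_inv, ← h]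

theorem mul_inv_mem_of_notMem (hD : IsGenDicyclic A x) {g : G} (hg : g ∉ A) : g * x⁻¹ ∈ A :=
  (hD.mem_or_mul_inv_mem g).resolve_left hg

theorem commute_sq (hD : IsGenDicyclic A x) (g : G) : Commute (x ^ 2) g := by
  rcases hD.mem_or_mul_inv_mem g with hg | hg
  · exact hD.commute _ hD.sq_mem _ hg
  · rw [← inv_mul_cancel_right g x]
    exact (hD.commute _ hD.sq_mem _ hg).mul_right ((Commute.refl x).pow_left 2)

theorem sq_of_notMem (hD : IsGenDicyclic A x) {g : G} (hg : g ∉ A) : g ^ 2 = x ^ 2 := by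
  have ha := hD.mul_inv_mem_of_notMem hg
  calc g ^ 2 = g * x⁻¹ * (x * (g * x⁻¹) * x⁻¹) * x ^ 2 := by rw [sq]; group
    _ = x ^ 2 := by rw [hD.mul_mul_inv ha]; group

theorem inv_eq_mul_sq_of_notMem (hD : IsGenDicyclic A x) {g : G} (hg : g ∉ A) :
    g⁻¹ = g * x ^ 2 :=
  inv_eq_of_mul_eq_one_right (by rw [← mul_assoc, ← sq, hD.sq_of_notMem hg, ← sq, hD.sq_sq])

theorem mul_mul_inv_of_notMem (hD : IsGenDicyclic A x) {g a : G} (hg : g ∉ A) (ha : a ∈ A) :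
    g * a * g⁻¹ = a⁻¹ := by
  have hb := hD.mul_inv_mem_of_notMem hg
  calc g * a * g⁻¹ = g * x⁻¹ * (x * a * x⁻¹) * (g * x⁻¹)⁻¹ := by group
    _ = a⁻¹ := by rw [hD.mul_mul_inv ha, (hD.commute _ hb _ (inv_mem ha)).eq]; group

theorem pow_three_eq (hD : IsGenDicyclic A x) {a : G} (ha : a ∈ A) (h6 : a ^ 6 = 1) :
    a ^ 3 = 1 ∨ a ^ 3 = x ^ 2 :=
  hD.eq_one_or_eq_sq _ (pow_mem ha 3) (by rw [← pow_mul]; exact h6)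

/-- Of `g` and `g⁻¹`, exactly one lies in `A₃ x`, where `A₃` is the `3`-part of `A`. -/
theorem inv_mul_inv_pow_three_eq_one_iff (hD : IsGenDicyclic A x) (hA6 : ∀ a ∈ A, a ^ 6 = 1)
    {g : G} (hg : g ∉ A) : (g⁻¹ * x⁻¹) ^ 3 = 1 ↔ (g * x⁻¹) ^ 3 ≠ 1 := by
  have ha := hD.mul_inv_mem_of_notMem hg
  have hx6 : (x ^ 2) ^ 3 = x ^ 2 := by rw [pow_succ, hD.sq_sq, one_mul]
  have : (g⁻¹ * x⁻¹) ^ 3 = (g * x⁻¹) ^ 3 * x ^ 2 := by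
    rw [hD.inv_eq_mul_sq_of_notMem hg, mul_assoc, ((hD.commute_sq x⁻¹)).eq, ← mul_assoc,
      ((hD.commute_sq _).symm).mul_pow, hx6]
  rw [this]
  rcases hD.pow_three_eq ha (hA6 _ ha) with h | h <;> rw [h]
  · simpa using hD.sq_ne_one
  · simpa [← sq, hD.sq_sq] using hD.sq_ne_one

end IsGenDicyclic

section

variable {K R G : Type*} [Field K] [Ring R] [Algebra K R] [Group G] (ρ : G →* R)
  {A : Subgroup G} {x : G}

theorem IsGenDicyclic.isIntDiagonalizable_sum_mul_one_add (hD : IsGenDicyclic A x)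
    {U : Finset G} (hU : ∀ g ∈ U, g ∉ A ∧ (g * x⁻¹) ^ 3 = 1) (hcard : #U ≤ 2) :
    IsIntDiagonalizable K ((∑ g ∈ U, ρ g) * (1 + ρ (x ^ 2))) := by
  classical
  have hy : ρ (x ^ 2) ^ 2 = 1 := by rw [← map_pow, hD.sq_sq, map_one]
  have hcomm (g : G) : Commute (ρ g) (ρ (x ^ 2)) := ((hD.commute_sq g).symm).map ρ
  interval_cases hU2 : #U
  · rw [card_eq_zero.1 hU2, sum_empty, zero_mul]
    exact isIntDiagonalizable_zero
  · obtain ⟨g, rfl⟩ := card_eq_one.1 hU2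
    rw [sum_singleton]
    refine isIntDiagonalizable_mul_one_add hy (hcomm g) (e := -1) ?_ (by norm_num)
    rw [← map_pow, hD.sq_of_notMem (hU g (mem_singleton_self g)).1]
    norm_num
  · obtain ⟨g, h, hgh, rfl⟩ := card_eq_two.1 hU2
    obtain ⟨hgA, hg3⟩ := hU g (by simp)
    obtain ⟨hhA, hh3⟩ := hU h (by simp)
    have hb : (g * h⁻¹) ^ 3 = 1 := by
      have hg' := hD.mul_inv_mem_of_notMem hgA
      have hh' := inv_mem (hD.mul_inv_mem_of_notMem hhA)
      rw [show g * h⁻¹ = g * x⁻¹ * (h * x⁻¹)⁻¹ by group, (hD.commute _ hg' _ hh').mul_pow,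
        inv_pow, hg3, hh3, inv_one, one_mul]
    have hgh' : g * h = g * h⁻¹ * x ^ 2 := by rw [← hD.sq_of_notMem hhA]; group
    have hhg : h * g = (g * h⁻¹)⁻¹ * x ^ 2 := by rw [← hD.sq_of_notMem hgA]; group
    set b := g * h⁻¹
    rw [sum_pair hgh]
    refine isIntDiagonalizable_mul_one_add hy ((hcomm g).add_left (hcomm h))
      (e := ρ b + ρ b⁻¹) ?_ (map_add_map_inv_sq_of_pow_three ρ hb)
    calc (ρ g + ρ h) ^ 2 = ρ (g ^ 2) + ρ (h ^ 2) + ρ (g * h) + ρ (h * g) := by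
          simp only [map_mul, map_pow]; noncomm_ring
      _ = (ρ b + ρ b⁻¹ + 2) * ρ (x ^ 2) := by
          rw [hD.sq_of_notMem hgA, hD.sq_of_notMem hhA, hgh', hhg]
          simp only [map_mul]
          noncomm_ring

theorem IsGenDicyclic.exists_sum_filter_notMem_eq [DecidablePred (· ∈ A)]
    (hD : IsGenDicyclic A x) (hA6 : ∀ a ∈ A, a ^ 6 = 1) {S : Finset G} (hS : ∀ s ∈ S, s⁻¹ ∈ S) :
    ∃ U : Finset G, (∀ g ∈ U, g ∉ A ∧ (g * x⁻¹) ^ 3 = 1) ∧ #U + #U = #(S.filter (· ∉ A)) ∧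
      ∑ g ∈ S.filter (· ∉ A), ρ g = (∑ g ∈ U, ρ g) * (1 + ρ (x ^ 2)) := by
  classical
  set O := S.filter (· ∉ A)
  set U := O.filter (fun g => (g * x⁻¹) ^ 3 = 1)
  have hU : ∀ g ∈ U, g ∉ A ∧ (g * x⁻¹) ^ 3 = 1 := fun g hg => by
    rw [mem_filter, mem_filter] at hg
    exact ⟨hg.1.2, hg.2⟩
  have hUinv : O.filter (fun g => ¬ (g * x⁻¹) ^ 3 = 1) = U⁻¹ := by
    ext g
    simp only [U, O, mem_filter, mem_inv', inv_mem_iff]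
    constructor
    · rintro ⟨⟨hgS, hgA⟩, hg⟩
      exact ⟨⟨hS g hgS, hgA⟩, (hD.inv_mul_inv_pow_three_eq_one_iff hA6 hgA).2 hg⟩
    · rintro ⟨⟨hgS, hgA⟩, hg⟩
      exact ⟨⟨by simpa using hS _ hgS, hgA⟩, (hD.inv_mul_inv_pow_three_eq_one_iff hA6 hgA).1 hg⟩
  refine ⟨U, hU, ?_, ?_⟩
  · rw [← card_filter_add_card_filter_not (s := O) (fun g => (g * x⁻¹) ^ 3 = 1), hUinv, card_inv]
  · rw [← sum_filter_add_sum_filter_not O (fun g => (g * x⁻¹) ^ 3 = 1), hUinv, sum_inv_index,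
      mul_one_add, sum_mul]
    refine congrArg _ (sum_congr rfl fun g hg => ?_)
    rw [hD.inv_eq_mul_sq_of_notMem (hU g hg).1, map_mul]

theorem IsGenDicyclic.isIntDiagonalizable_sum_of_card_le_five [CharZero K]
    (hD : IsGenDicyclic A x) (hA6 : ∀ a ∈ A, a ^ 6 = 1) {S : Finset G} (hS : ∀ s ∈ S, s⁻¹ ∈ S)
    (hcard : #S ≤ 5) : IsIntDiagonalizable K (∑ s ∈ S, ρ s) := by
  classical
  obtain ⟨U, hU, hUcard, hO⟩ := hD.exists_sum_filter_notMem_eq ρ hA6 hS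
  have hE : ∀ g ∈ S.filter (· ∈ A), g⁻¹ ∈ S.filter (· ∈ A) := fun g hg => by
    rw [mem_filter] at hg ⊢
    exact ⟨hS g hg.1, inv_mem hg.2⟩
  have hOcard := card_filter_le S (· ∉ A)
  rw [← sum_filter_add_sum_filter_not S (· ∈ A), hO]
  refine IsIntDiagonalizable.add ?_
    (isIntDiagonalizable_sum_of_pow_six ρ _ hE
      (fun g hg h hh => hD.commute g (mem_filter.1 hg).2 h (mem_filter.1 hh).2)
      (fun g hg => hA6 g (mem_filter.1 hg).2))
    (hD.isIntDiagonalizable_sum_mul_one_add ρ hU (by omega))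
  rw [← hO]
  exact Commute.sum_right _ _ _ fun g hg => (commute_map_sum_of_conj_eq_inv ρ hE
    fun a ha => hD.mul_mul_inv_of_notMem (mem_filter.1 hg).2 (mem_filter.1 ha).2).symm

end

theorem eq_one_or_eq_of_mem_zpowers {G : Type*} [Group G] {y z : G} (hy : y ^ 2 = 1)
    (hz : z ∈ Subgroup.zpowers y) : z = 1 ∨ z = y := by
  obtain ⟨k, rfl⟩ := Subgroup.mem_zpowers_iff.1 hz
  obtain ⟨j, rfl | rfl⟩ := Int.even_or_odd' k
  · left
    rw [zpow_mul, zpow_two, ← sq, hy, one_zpow]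
  · right
    rw [zpow_add_one, zpow_mul, zpow_two, ← sq, hy, one_zpow, one_mul]

section

variable {G : Type*} [Group G] {P : Subgroup G} {x : G}

theorem commute_sq_of_closure_eq_top (hinv : ∀ u : G, u ∈ P → x⁻¹ * u * x = u⁻¹)
    (hgen : Subgroup.closure ((P : Set G) ∪ {x}) = ⊤) (g : G) : Commute (x ^ 2) g := by
  suffices Subgroup.closure ((P : Set G) ∪ {x}) ≤ Subgroup.centralizer {x ^ 2} from
    (Subgroup.mem_centralizer_singleton_iff.1 (this (hgen ▸ Subgroup.mem_top g))).symm
  rw [Subgroup.closure_le]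
  rintro g (hg | rfl) <;> refine Subgroup.mem_centralizer_singleton_iff.2 ?_
  · have h₁ := hinv g hg
    have h₂ := hinv g⁻¹ (inv_mem hg)
    rw [inv_inv] at h₂
    calc g * x ^ 2 = x ^ 2 * (x⁻¹ * (x⁻¹ * g * x) * x) := by simp only [sq]; group
      _ = x ^ 2 * g := by rw [h₁, h₂]
  · exact (Commute.self_pow _ 2).eq

theorem exists_mem_mul_of_mem_sup_zpowers_sq [P.Normal] (hx : (x ^ 2) ^ 2 = 1) {a : G}
    (ha : a ∈ P ⊔ Subgroup.zpowers (x ^ 2)) : ∃ p ∈ P, ∃ z, (z = 1 ∨ z = x ^ 2) ∧ a = p * z := by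
  obtain ⟨p, hp, z, hz, rfl⟩ := Subgroup.mem_sup_of_normal_left.1 ha
  exact ⟨p, hp, z, eq_one_or_eq_of_mem_zpowers hx hz, rfl⟩

theorem sq_sq_eq_one_of_orderOf_eq_four (hx : orderOf x = 4) : (x ^ 2) ^ 2 = 1 := by
  rw [← pow_mul, show 2 * 2 = orderOf x by rw [hx], pow_orderOf_eq_one]

theorem mem_or_mul_inv_mem_sup_zpowers_sq [P.Normal]
    (hgen : Subgroup.closure ((P : Set G) ∪ {x}) = ⊤) (g : G) :
    g ∈ P ⊔ Subgroup.zpowers (x ^ 2) ∨ g * x⁻¹ ∈ P ⊔ Subgroup.zpowers (x ^ 2) := by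
  have hg : g ∈ P ⊔ Subgroup.zpowers x := by
    rw [Subgroup.zpowers_eq_closure, ← Subgroup.closure_eq P, ← Subgroup.closure_union, hgen]
    exact Subgroup.mem_top g
  obtain ⟨p, hp, _, hk, rfl⟩ := Subgroup.mem_sup_of_normal_left.1 hg
  obtain ⟨k, rfl⟩ := Subgroup.mem_zpowers_iff.1 hk
  have heven (j : ℤ) : p * x ^ (j + j) ∈ P ⊔ Subgroup.zpowers (x ^ 2) := by
    refine Subgroup.mul_mem_sup hp ?_
    rw [← two_mul, zpow_mul, zpow_two, ← sq]
    exact zpow_mem (Subgroup.mem_zpowers _) j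
  rcases Int.even_or_odd' k with ⟨j, rfl | rfl⟩
  · exact Or.inl (by simpa [two_mul] using heven j)
  · right
    rw [zpow_add_one, ← mul_assoc, mul_inv_cancel_right]
    simpa [two_mul] using heven j

theorem isGenDicyclic_sup_zpowers_sq [P.Normal] (hPab : ∀ a b : G, a ∈ P → b ∈ P → a * b = b * a)
    (hPexp : ∀ p : G, p ∈ P → p ^ 3 = 1) (hx : orderOf x = 4)
    (hinv : ∀ u : G, u ∈ P → x⁻¹ * u * x = u⁻¹)
    (hgen : Subgroup.closure ((P : Set G) ∪ {x}) = ⊤) :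
    IsGenDicyclic (P ⊔ Subgroup.zpowers (x ^ 2)) x := by
  have hy := sq_sq_eq_one_of_orderOf_eq_four hx
  have hcz (z : G) (hz : z = 1 ∨ z = x ^ 2) (g : G) : Commute z g := by
    rcases hz with rfl | rfl
    exacts [Commute.one_left g, commute_sq_of_closure_eq_top hinv hgen g]
  have hz2 (z : G) (hz : z = 1 ∨ z = x ^ 2) : z ^ 2 = 1 := by
    rcases hz with rfl | rfl
    exacts [one_pow 2, hy]
  refine ⟨?_, Subgroup.mem_sup_right (Subgroup.mem_zpowers _), fun h => ?_, ?_, ?_,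
    mem_or_mul_inv_mem_sup_zpowers_sq hgen⟩
  · intro a ha b hb
    obtain ⟨p, hp, z, hz, rfl⟩ := exists_mem_mul_of_mem_sup_zpowers_sq hy ha
    obtain ⟨q, hq, w, hw, rfl⟩ := exists_mem_mul_of_mem_sup_zpowers_sq hy hb
    exact (Commute.mul_right (hPab p q hp hq) (hcz w hw p).symm).mul_left (hcz z hz _)
  · have := orderOf_le_of_pow_eq_one (by norm_num) h
    omega
  · intro a ha h2
    obtain ⟨p, hp, z, hz, rfl⟩ := exists_mem_mul_of_mem_sup_zpowers_sq hy ha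
    have hp2 : p ^ 2 = 1 := by rwa [(hcz z hz p).symm.mul_pow, hz2 z hz, mul_one] at h2
    have hp1 : p = 1 := by simpa [pow_succ, hp2] using hPexp p hp
    rwa [hp1, one_mul]
  · intro a ha
    obtain ⟨p, hp, z, hz, rfl⟩ := exists_mem_mul_of_mem_sup_zpowers_sq hy ha
    have hzinv : z⁻¹ = z := inv_eq_of_mul_eq_one_left (by rw [← sq, hz2 z hz])
    calc x⁻¹ * (p * z) * x = (x⁻¹ * p * x) * (x⁻¹ * (z * x)) := by group
      _ = (p * z)⁻¹ := by
        rw [hinv p hp, (hcz z hz x).eq, inv_mul_cancel_left, mul_inv_rev, hzinv,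
          (hcz z hz p⁻¹).eq]

theorem pow_six_eq_one_of_mem_sup_zpowers_sq [P.Normal] (hPexp : ∀ p : G, p ∈ P → p ^ 3 = 1)
    (hx : orderOf x = 4) (hinv : ∀ u : G, u ∈ P → x⁻¹ * u * x = u⁻¹)
    (hgen : Subgroup.closure ((P : Set G) ∪ {x}) = ⊤) {a : G}
    (ha : a ∈ P ⊔ Subgroup.zpowers (x ^ 2)) : a ^ 6 = 1 := by
  have hy := sq_sq_eq_one_of_orderOf_eq_four hx
  obtain ⟨p, hp, z, hz, rfl⟩ := exists_mem_mul_of_mem_sup_zpowers_sq hy ha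
  have hpz : Commute p z := by
    rcases hz with rfl | rfl
    exacts [Commute.one_right p, (commute_sq_of_closure_eq_top hinv hgen p).symm]
  have hz2 : z ^ 2 = 1 := by rcases hz with rfl | rfl <;> simp [hy]
  rw [hpz.mul_pow, show 6 = 3 * 2 by rfl, pow_mul, hPexp p hp, one_pow, one_mul, pow_mul', hz2,
    one_pow]

end

theorem adjMatrix_cayley_eq_sum {K G : Type*} [Semiring K] [Group G] [Fintype G] [DecidableEq G]
    {S : Finset G} (h1 : (1 : G) ∉ S) (hS : ∀ s ∈ S, s⁻¹ ∈ S)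
    [DecidableRel (cayley (S : Set G)).Adj] :
    (cayley (S : Set G)).adjMatrix K =
      ∑ s ∈ S, (Matrix.permMatrixHom (n := G) (R := K)).comp (MulAction.toPermHom G G) s := by
  ext a b
  have hadj : (cayley (S : Set G)).Adj a b ↔ a * b⁻¹ ∈ S := by
    simp only [cayley, SimpleGraph.fromRel_adj, mem_coe]
    constructor
    · rintro ⟨-, h | h⟩
      · simpa using hS _ h
      · exact h
    · intro h
      exact ⟨fun hab => h1 (by simpa [hab] using h), Or.inr h⟩
  have hfilter : S.filter (fun s => s⁻¹ * a = b) = S.filter (· = a * b⁻¹) :=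
    filter_congr fun s _ => by constructor <;> rintro rfl <;> group
  rw [Matrix.sum_apply, SimpleGraph.adjMatrix_apply]
  by_cases h : a * b⁻¹ ∈ S <;> simp [PEquiv.toMatrix_apply, hfilter, filter_eq', hadj, h]

theorem dic_in_G5_general (G : Type*) [Group G] [Finite G]
    (P : Subgroup G) [P.Normal]
    (hPab : ∀ a b : G, a ∈ P → b ∈ P → a * b = b * a)
    (hPexp : ∀ p : G, p ∈ P → p ^ 3 = 1)
    (x : G) (hx : orderOf x = 4)
    (hinv : ∀ u : G, u ∈ P → x⁻¹ * u * x = u⁻¹)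
    (hgen : Subgroup.closure ((P : Set G) ∪ {x}) = ⊤) :
    ∀ S : Finset G, (1 : G) ∉ S → (∀ s ∈ S, s⁻¹ ∈ S) → S.card ≤ 5 →
      IsIntegralGraph (cayley (S : Set G)) := by
  intro S hS1 hS hcard μ hμ
  classical
  let := Fintype.ofFinite G
  have hD := isGenDicyclic_sup_zpowers_sq hPab hPexp hx hinv hgen
  have hA6 (a : G) (ha : a ∈ P ⊔ Subgroup.zpowers (x ^ 2)) : a ^ 6 = 1 :=
    pow_six_eq_one_of_mem_sup_zpowers_sq hPexp hx hinv hgen ha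
  rw [adjMatrix_cayley_eq_sum hS1 hS] at hμ
  exact (hD.isIntDiagonalizable_sum_of_card_le_five _ hA6 hS hcard).exists_intCast_eq hμ

theorem dic_in_G5 (n : ℕ) (G : Type*) [Group G] [Finite G]
    (P : Subgroup G) [P.Normal]
    (hPab : ∀ a b : G, a ∈ P → b ∈ P → a * b = b * a)
    (hPexp : ∀ p : G, p ∈ P → p ^ 3 = 1)
    (hPcard : Nat.card P = 3 ^ (n + 1))
    (x : G) (hx : orderOf x = 4)
    (hinv : ∀ u : G, u ∈ P → x⁻¹ * u * x = u⁻¹)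
    (hgen : Subgroup.closure ((P : Set G) ∪ {x}) = ⊤)
    (hcard : Nat.card G = 4 * 3 ^ (n + 1)) :
    ∀ S : Finset G, (1 : G) ∉ S → (∀ s ∈ S, s⁻¹ ∈ S) → S.card ≤ 5 →
      IsIntegralGraph (cayley (S : Set G)) :=
  dic_in_G5_general G P hPab hPexp x hx hinv hgen
end

section
/- The Cayley graph of D₆ × ℤ₃ = ⟨x, u, v⟩, where x² = u³ = v³ = 1, u and v commute, xux = u, and xvx = v⁻¹, with connection set {xu, xu⁻¹, xv} has √3 as an eigenvalue; in particular, D₆ × ℤ₃ admits a non-integral Cayley graph with connection set of size 3. -/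
/-!
Sending `sr 0`, `r 1` and the generator of `ℤ₃` to `x`, `v` and `u` respects the defining
relations of `D₃ × ℤ₃`, so it defines a homomorphism `D₃ × ℤ₃ →* G`; it is onto because
`x, u, v` generate `G`, hence an isomorphism since both groups have order 18. It carries the
connection set `{(sr 0, u), (sr 0, u⁻¹), (sr 1, 1)}` to `{xu, xu⁻¹, xv}`, so the two Cayley graphs
are isomorphic. On the model group one checks by computation that `p + √3 q` is an eigenvector
for two explicit integer vectors `p, q`; as `√3` is irrational, the graph is not integral.
-/

open scoped Matrix

section Spectrum

variable {V W : Type*} [Finite V] {Γ : SimpleGraph V}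

theorem isAdjEigenvalue_iff [Fintype V] [DecidableEq V] [DecidableRel Γ.Adj] {μ : ℝ} :
    IsAdjEigenvalue Γ μ ↔ μ ∈ spectrum ℝ (Γ.adjMatrix ℝ) := by
  unfold IsAdjEigenvalue
  convert Iff.rfl

theorem isAdjEigenvalue_of_mulVec_eq_smul [Fintype V] [DecidableEq V] [DecidableRel Γ.Adj]
    {μ : ℝ} {f : V → ℝ} (hf : f ≠ 0) (h : Γ.adjMatrix ℝ *ᵥ f = μ • f) :
    IsAdjEigenvalue Γ μ := by
  rw [isAdjEigenvalue_iff, ← Matrix.spectrum_toLin', ← Module.End.hasEigenvalue_iff_mem_spectrum]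
  exact Module.End.hasEigenvalue_of_hasEigenvector
    ⟨Module.End.mem_eigenspace_iff.mpr (by rwa [Matrix.toLin'_apply]), hf⟩

theorem SimpleGraph.Iso.isAdjEigenvalue [Finite W] {Γ' : SimpleGraph W} (φ : Γ ≃g Γ')
    {μ : ℝ} (h : IsAdjEigenvalue Γ μ) : IsAdjEigenvalue Γ' μ := by
  classical
  have := Fintype.ofFinite V
  have := Fintype.ofFinite W
  rw [isAdjEigenvalue_iff] at h ⊢
  have hA : Γ'.adjMatrix ℝ = Matrix.reindexAlgEquiv ℝ ℝ φ.toEquiv (Γ.adjMatrix ℝ) := by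
    ext i j
    simp only [Matrix.coe_reindexAlgEquiv, Matrix.reindex_apply, Matrix.submatrix_apply,
      SimpleGraph.adjMatrix_apply]
    exact if_congr (φ.symm.map_adj_iff).symm rfl rfl
  rwa [hA, AlgEquiv.spectrum_eq]

theorem IsAdjEigenvalue.not_isIntegralGraph {μ : ℝ} (h : IsAdjEigenvalue Γ μ)
    (hμ : Irrational μ) : ¬ IsIntegralGraph Γ :=
  fun hΓ ↦ hμ.ne_int (hΓ μ h).choose (hΓ μ h).choose_spec.symm

end Spectrum

theorem SimpleGraph.adjMatrix_map_intCast {V R : Type*} [DecidableEq V] [Ring R]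
    (Γ : SimpleGraph V) [DecidableRel Γ.Adj] : (Γ.adjMatrix ℤ).map (↑) = Γ.adjMatrix R := by
  ext i j
  by_cases h : Γ.Adj i j <;> simp [h]

theorem Matrix.map_intCast_mulVec_add_sqrt_mul {ι : Type*} [Fintype ι] {A : Matrix ι ι ℤ}
    {p q : ι → ℤ} {d : ℕ} (hp : A *ᵥ p = d • q) (hq : A *ᵥ q = p) :
    A.map (↑) *ᵥ (fun i ↦ p i + √d * q i) = √d • fun i ↦ p i + √d * q i := by
  have hcast (w : ι → ℤ) : A.map (↑) *ᵥ (fun i ↦ (w i : ℝ)) = fun i ↦ ((A *ᵥ w) i : ℝ) :=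
    funext fun i ↦ ((Int.castRingHom ℝ).map_mulVec A w i).symm
  have hsplit : (fun i ↦ (p i : ℝ) + √d * q i) = (fun i ↦ (p i : ℝ)) + √d • fun i ↦ (q i : ℝ) :=
    rfl
  rw [hsplit, Matrix.mulVec_add, Matrix.mulVec_smul, hcast, hcast, hp, hq]
  funext i
  simp only [Pi.add_apply, Pi.smul_apply, smul_eq_mul, nsmul_eq_mul, Int.cast_mul,
    Int.cast_natCast]
  linear_combination -(q i : ℝ) * Real.sq_sqrt (Nat.cast_nonneg d)

def MulEquiv.cayleyIso {G H : Type*} [Group G] [Group H] (e : G ≃* H) (S : Set G) :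
    cayley S ≃g cayley (e '' S) where
  toEquiv := e.toEquiv
  map_rel_iff' := by simp [cayley, ← map_inv, ← map_mul]

instance {G : Type*} [Group G] [DecidableEq G] (S : Finset G) :
    DecidableRel (cayley (S : Set G)).Adj :=
  fun g h ↦ inferInstanceAs (Decidable (g ≠ h ∧ (h * g⁻¹ ∈ S ∨ g * h⁻¹ ∈ S)))

section Presentation

variable {G : Type*} [Group G] {n m : ℕ}

theorem Commute.of_mul_mul_eq_self {x u : G} (hx : x ^ 2 = 1) (h : x * u * x = u) :
    Commute x u :=
  calc x * u = x * u * x * x := by rw [mul_assoc _ x, ← sq, hx, mul_one]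
    _ = u * x := by rw [h]

theorem mul_zpow_eq_zpow_neg_mul {x v : G} (hx : x ^ 2 = 1) (hxv : x * v * x = v⁻¹) (k : ℤ) :
    x * v ^ k = v ^ (-k) * x := by
  have hx' : x⁻¹ = x := inv_eq_of_mul_eq_one_right (by rwa [← sq])
  have h : x * v ^ k * x⁻¹ = v ^ (-k) := by
    rw [← conj_zpow, hx', hxv, zpow_neg, inv_zpow]
  rw [← h, hx', mul_assoc _ x, ← sq, hx, mul_one]

def zmodPowHom {a : G} (ha : a ^ n = 1) : Multiplicative (ZMod n) →* G :=
  AddMonoidHom.toMultiplicativeLeft <|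
    ZMod.lift n ⟨zmultiplesHom (Additive G) (Additive.ofMul a), by simp [← ofMul_pow, ha]⟩

@[simp]
theorem zmodPowHom_intCast {a : G} (ha : a ^ n = 1) (k : ℤ) :
    zmodPowHom ha (.ofAdd (k : ZMod n)) = a ^ k := by
  simp [zmodPowHom]

@[simp]
theorem zmodPowHom_ofAdd_one {a : G} (ha : a ^ n = 1) : zmodPowHom ha (.ofAdd 1) = a := by
  simpa using zmodPowHom_intCast ha 1

theorem exists_zmodPowHom_eq_zpow {a : G} (ha : a ^ n = 1) (i : Multiplicative (ZMod n)) :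
    ∃ k : ℤ, zmodPowHom ha i = a ^ k := by
  obtain ⟨k, rfl⟩ := ZMod.intCast_surjective i.toAdd
  exact ⟨k, zmodPowHom_intCast ha k⟩

theorem mul_zmodPowHom {x v : G} (hx : x ^ 2 = 1) (hv : v ^ n = 1) (hxv : x * v * x = v⁻¹)
    (i : Multiplicative (ZMod n)) : x * zmodPowHom hv i = (zmodPowHom hv i)⁻¹ * x := by
  obtain ⟨k, hk⟩ := exists_zmodPowHom_eq_zpow hv i
  rw [hk, mul_zpow_eq_zpow_neg_mul hx hxv, zpow_neg]

def DihedralGroup.lift {x v : G} (hx : x ^ 2 = 1) (hv : v ^ n = 1) (hxv : x * v * x = v⁻¹) :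
    DihedralGroup n →* G where
  toFun
    | r i => zmodPowHom hv (.ofAdd i)
    | sr i => x * zmodPowHom hv (.ofAdd i)
  map_one' := map_one (zmodPowHom hv)
  map_mul' := by
    have hxx : x * x = 1 := by rwa [← sq]
    have key := mul_zmodPowHom hx hv hxv
    have key' (i : Multiplicative (ZMod n)) : zmodPowHom hv i * x = x * (zmodPowHom hv i)⁻¹ := by
      rw [← map_inv, key, map_inv, inv_inv]
    rintro (i | i) (j | j) <;>
      simp only [r_mul_r, r_mul_sr, sr_mul_r, sr_mul_sr, sub_eq_neg_add, ofAdd_add, ofAdd_neg,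
        map_mul, map_inv]
    · rw [← mul_assoc, ← mul_assoc, key']
    · rw [mul_assoc]
    · rw [key, mul_assoc, ← mul_assoc x, hxx, one_mul]

variable {x u v : G} (hx : x ^ 2 = 1) (hu : u ^ m = 1) (hv : v ^ n = 1) (hxv : x * v * x = v⁻¹)

@[simp]
theorem DihedralGroup.lift_r (i : ZMod n) : lift hx hv hxv (.r i) = zmodPowHom hv (.ofAdd i) :=
  rfl

@[simp]
theorem DihedralGroup.lift_sr (i : ZMod n) :
    lift hx hv hxv (.sr i) = x * zmodPowHom hv (.ofAdd i) :=
  rfl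

theorem DihedralGroup.commute_lift {y : G} (hxy : Commute x y) (hvy : Commute v y)
    (d : DihedralGroup n) : Commute (lift hx hv hxv d) y := by
  have hc (i : ZMod n) : Commute (zmodPowHom hv (.ofAdd i)) y := by
    obtain ⟨k, hk⟩ := exists_zmodPowHom_eq_zpow hv (.ofAdd i)
    exact hk ▸ hvy.zpow_left k
  cases d with
  | r i => exact hc i
  | sr i => exact hxy.mul_left (hc i)

variable (hxu : Commute x u) (hvu : Commute v u)

def dihedralProdHom : DihedralGroup n × Multiplicative (ZMod m) →* G :=
  (DihedralGroup.lift hx hv hxv).noncommCoprod (zmodPowHom hu) fun d z ↦ by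
    obtain ⟨k, hk⟩ := exists_zmodPowHom_eq_zpow hu z
    exact hk ▸ (DihedralGroup.commute_lift hx hv hxv hxu hvu d).zpow_right k

@[simp]
theorem dihedralProdHom_apply (d : DihedralGroup n) (z : Multiplicative (ZMod m)) :
    dihedralProdHom hx hu hv hxv hxu hvu (d, z) =
      DihedralGroup.lift hx hv hxv d * zmodPowHom hu z :=
  rfl

theorem dihedralProdHom_surjective (hgen : Subgroup.closure {x, u, v} = ⊤) :
    Function.Surjective (dihedralProdHom hx hu hv hxv hxu hvu) := by
  rw [← MonoidHom.range_eq_top, eq_top_iff, ← hgen, Subgroup.closure_le]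
  rintro g (rfl | rfl | rfl)
  · exact ⟨(.sr 0, 1), by simp⟩
  · exact ⟨(.r 0, .ofAdd 1), by simp⟩
  · exact ⟨(.r 1, 1), by simp⟩

end Presentation

namespace DihedralProdCyclic

open DihedralGroup

abbrev Model := DihedralGroup 3 × Multiplicative (ZMod 3)

def connectionSet : Finset Model := {(sr 0, .ofAdd 1), (sr 0, .ofAdd (-1)), (sr 1, 1)}

def ratPart (k : Model) : ℤ :=
  if k = (sr 0, 1) then -3 else if k = (sr 1, 1) then 3 else 0

def sqrt3Part (k : Model) : ℤ :=
  if k = (r 0, 1) then 1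
  else if k = (r 0, .ofAdd 1) then -1
  else if k = (r 0, .ofAdd 2) then -1
  else if k = (r 1, .ofAdd 1) then 1
  else if k = (r 1, .ofAdd 2) then 1
  else if k = (r 2, 1) then -1
  else 0

theorem adjMatrix_mulVec_ratPart :
    (cayley (connectionSet : Set Model)).adjMatrix ℤ *ᵥ ratPart = 3 • sqrt3Part := by
  decide

theorem adjMatrix_mulVec_sqrt3Part :
    (cayley (connectionSet : Set Model)).adjMatrix ℤ *ᵥ sqrt3Part = ratPart := by
  decide

theorem isAdjEigenvalue_sqrt_three : IsAdjEigenvalue (cayley (connectionSet : Set Model)) √3 := by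
  refine isAdjEigenvalue_of_mulVec_eq_smul (f := fun k ↦ ratPart k + √3 * sqrt3Part k) ?_ ?_
  · have hp : ratPart (sr 1, 1) = 3 := by decide
    have hq : sqrt3Part (sr 1, 1) = 0 := by decide
    exact Function.ne_iff.mpr ⟨(sr 1, 1), by simp [hp, hq]⟩
  · rw [← SimpleGraph.adjMatrix_map_intCast]
    simpa using Matrix.map_intCast_mulVec_add_sqrt_mul (d := 3) adjMatrix_mulVec_ratPart
      adjMatrix_mulVec_sqrt3Part

end DihedralProdCyclic

open DihedralProdCyclic in
theorem D6_times_Z3_cayley_not_integral (G : Type*) [Group G] [Finite G]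
    (hcard : Nat.card G = 18)
    (x u v : G) (hx : x ^ 2 = 1) (hu : u ^ 3 = 1) (hv : v ^ 3 = 1)
    (huv : u * v = v * u) (hxu : x * u * x = u) (hxv : x * v * x = v⁻¹)
    (hgen : Subgroup.closure {x, u, v} = ⊤) :
    IsAdjEigenvalue (cayley ({x * u, x * u⁻¹, x * v} : Set G)) (Real.sqrt 3) ∧
      ¬ IsIntegralGraph (cayley ({x * u, x * u⁻¹, x * v} : Set G)) := by
  have hxu' : Commute x u := .of_mul_mul_eq_self hx hxu
  have hvu : Commute v u := huv.symm
  have hbij : Function.Bijective (dihedralProdHom hx hu hv hxv hxu' hvu) :=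
    (Nat.bijective_iff_surjective_and_card _).mpr
      ⟨dihedralProdHom_surjective _ _ _ _ _ _ hgen, by simp [hcard, DihedralGroup.card]⟩
  have hS : dihedralProdHom hx hu hv hxv hxu' hvu '' connectionSet = {x * u, x * u⁻¹, x * v} := by
    simp only [connectionSet, Finset.coe_insert, Finset.coe_singleton, Set.image_insert_eq,
      Set.image_singleton]
    simp
  have h : IsAdjEigenvalue (cayley ({x * u, x * u⁻¹, x * v} : Set G)) √3 :=
    hS ▸ ((MulEquiv.ofBijective _ hbij).cayleyIso _).isAdjEigenvalue isAdjEigenvalue_sqrt_three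
  exact ⟨h, h.not_isIntegralGraph Nat.prime_three.irrational_sqrt⟩
end

section
/- Let G be a finite non-abelian 2-group of exponent 4 in which every subgroup isomorphic to a minimal non-abelian group is isomorphic to Q₈, H₂ = ⟨a,b | a⁴ = b⁴ = 1, aᵇ = a⁻¹⟩, or H₃₂ (equivalently, G has no subgroup isomorphic to D₈ or H₁₆). Then every involution of G lies in the center of G. -/
/-!
Two non-commuting involutions `x, y` would generate the dihedral group `⟨x * y, x⟩` of order 8,
so the involutions of `G` commute pairwise. Hence `⁅g, s⁆ = (g * s * g⁻¹) * s` is an involution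
commuting with `s` whenever `s` is an involution. As `G` is nilpotent, iterating `s ↦ ⁅g, s⁆`
from a non-central involution ends at an involution `s` with `c = ⁅g, s⁆ ≠ 1` commuting with `g`.
Then `⟨g, s⟩` is `D₈` if `g ^ 2 = c` and `H₁₆` otherwise (`g ^ 2 = 1` is impossible, as `g` and
`s` do not commute). The orders of these subgroups are computed by repeatedly adjoining to a
subgroup `N` an element `b ∉ N` normalising `N` with `b ^ 2 ∈ N`, which doubles the order.
-/

open scoped commutatorElement

open Subgroup

section IndexTwo

variable {G : Type*} [Group G]

theorem zpow_mem_iff_even {N : Subgroup G} {b : G} (hb : b ∉ N) (hb2 : b ^ 2 ∈ N) (k : ℤ) :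
    b ^ k ∈ N ↔ Even k := by
  have hsplit : b ^ k = (b ^ 2) ^ (k / 2) * b ^ (k % 2) := by
    rw [← zpow_natCast, ← zpow_mul, ← zpow_add, Nat.cast_ofNat, Int.mul_ediv_add_emod]
  rw [hsplit, mul_mem_cancel_left (zpow_mem hb2 _), Int.even_iff]
  rcases Int.emod_two_eq_zero_or_one k with h | h <;> simp [h, hb]

theorem relIndex_zpowers_eq_two {N : Subgroup G} {b : G} (hb : b ∉ N) (hb2 : b ^ 2 ∈ N) :
    N.relIndex (zpowers b) = 2 := by
  refine relIndex_eq_two_iff.2 ⟨b, mem_zpowers b, ?_⟩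
  rintro _ ⟨k, rfl⟩
  simp only [← zpow_add_one, zpow_mem_iff_even hb hb2, Int.even_add_one]
  tauto

theorem relIndex_sup_right_of_le_normalizer {H N : Subgroup G} (h : H ≤ normalizer (N : Set G)) :
    N.relIndex (H ⊔ N) = N.relIndex H :=
  letI := normal_subgroupOf_of_le_normalizer h
  letI := normal_subgroupOf_sup_of_le_normalizer h
  Nat.card_congr (QuotientGroup.quotientInfEquivProdNormalizerQuotient H N h).toEquiv.symm

theorem card_closure_insert_of_sq_mem {s : Set G} {b : G} (hb : b ∉ closure s)
    (hb2 : b ^ 2 ∈ closure s) (hnorm : b ∈ normalizer (closure s : Set G)) :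
    Nat.card (closure (insert b s)) = 2 * Nat.card (closure s) := by
  have hsup : closure (insert b s) = zpowers b ⊔ closure s := by
    rw [Set.insert_eq, Subgroup.closure_union, zpowers_eq_closure]
  rw [hsup, ← relIndex_bot_left, ← relIndex_mul_relIndex ⊥ (closure s) _ bot_le le_sup_right,
    relIndex_sup_right_of_le_normalizer (zpowers_le.2 hnorm), relIndex_zpowers_eq_two hb hb2,
    relIndex_bot_left, mul_comm]

theorem mem_normalizer_closure_of_conj_mem [Finite G] {s : Set G} {g : G}
    (h : ∀ x ∈ s, g * x * g⁻¹ ∈ closure s) : g ∈ normalizer (closure s : Set G) := by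
  refine mem_normalizer_fintype fun n hn => ?_
  have hmap : (closure s).map (MulAut.conj g).toMonoidHom ≤ closure s := by
    rw [MonoidHom.map_closure, closure_le]
    rintro _ ⟨x, hx, rfl⟩
    exact h x hx
  exact hmap ⟨n, hn, rfl⟩

theorem notMem_closure_of_not_commute {s : Set G} {a b : G} (hs : ∀ x ∈ s, Commute a x)
    (hab : ¬Commute a b) : b ∉ closure s := fun hb =>
  hab (mem_centralizer_singleton_iff.1
    ((closure_le _).2 (fun x hx => mem_centralizer_singleton_iff.2 (hs x hx).eq.symm) hb)).symm

end IndexTwo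

section Involutions

variable {G : Type*} [Group G] {g s x y : G}

theorem inv_eq_of_sq_eq_one (h : x ^ 2 = 1) : x⁻¹ = x :=
  inv_eq_of_mul_eq_one_right (by rwa [← sq])

theorem mul_mul_mul_eq_inv_of_sq_eq_one (hx : x ^ 2 = 1) (hy : y ^ 2 = 1) :
    x * (x * y) * x = (x * y)⁻¹ := by
  rw [mul_inv_rev, inv_eq_of_sq_eq_one hx, inv_eq_of_sq_eq_one hy, ← mul_assoc x x y, ← sq, hx,
    one_mul]

theorem sq_mul_ne_one_of_not_commute (hx : x ^ 2 = 1) (hy : y ^ 2 = 1) (hxy : ¬Commute x y) :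
    (x * y) ^ 2 ≠ 1 := fun h => hxy <| by
  have h' := inv_eq_of_sq_eq_one h
  rw [mul_inv_rev, inv_eq_of_sq_eq_one hx, inv_eq_of_sq_eq_one hy] at h'
  exact h'.symm

theorem mul_mul_eq_inv_of_commutatorElement_eq_sq (hs : s ^ 2 = 1) (h : ⁅g, s⁆ = g ^ 2) :
    s * g * s = g⁻¹ := by
  rw [commutatorElement_def, sq, inv_eq_of_sq_eq_one hs, mul_assoc, mul_assoc, mul_right_inj,
    ← mul_assoc] at h
  calc s * g * s = (s * g⁻¹ * s)⁻¹ := by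
        rw [mul_inv_rev, mul_inv_rev, inv_inv, inv_eq_of_sq_eq_one hs, mul_assoc]
    _ = g⁻¹ := by rw [h]

variable (hcomm : ∀ x y : G, x ^ 2 = 1 → y ^ 2 = 1 → Commute x y)
include hcomm

theorem commute_commutatorElement_self (g : G) (hx : x ^ 2 = 1) : Commute ⁅g, x⁆ x := by
  have hconj : (g * x * g⁻¹) ^ 2 = 1 := by rw [conj_pow, hx, mul_one, mul_inv_cancel]
  rw [commutatorElement_def, inv_eq_of_sq_eq_one hx]
  exact (hcomm _ _ hconj hx).mul_left (Commute.refl x)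

theorem sq_commutatorElement_eq_one (g : G) (hx : x ^ 2 = 1) : ⁅g, x⁆ ^ 2 = 1 := by
  have hconj : (g * x * g⁻¹) ^ 2 = 1 := by rw [conj_pow, hx, mul_one, mul_inv_cancel]
  rw [commutatorElement_def, inv_eq_of_sq_eq_one hx, (hcomm _ _ hconj hx).mul_pow, hconj, hx,
    one_mul]

end Involutions

section Exponent4

variable {G : Type*} [Group G] {a b c : G}

theorem orderOf_eq_four (ha : a ^ 4 = 1) (ha2 : a ^ 2 ≠ 1) : orderOf a = 4 :=
  orderOf_eq_prime_pow (p := 2) (n := 1) ha2 ha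

theorem card_closure_singleton_eq_four (ha : a ^ 4 = 1) (ha2 : a ^ 2 ≠ 1) :
    Nat.card (closure {a}) = 4 := by
  rw [← zpowers_eq_closure, Nat.card_zpowers, orderOf_eq_four ha ha2]

theorem eq_one_or_eq_sq_of_mem_zpowers (ha : a ^ 4 = 1) (ha2 : a ^ 2 ≠ 1) (hc : c ^ 2 = 1)
    (hca : c ∈ zpowers a) : c = 1 ∨ c = a ^ 2 := by
  obtain ⟨k, rfl⟩ := mem_zpowers_iff.1 hca
  rw [← zpow_mod_orderOf, orderOf_eq_four ha ha2] at hc ⊢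
  have hk : k % (4 : ℕ) < 4 := Int.emod_lt_of_pos k (by norm_num)
  have hk' : 0 ≤ k % (4 : ℕ) := Int.emod_nonneg k (by norm_num)
  interval_cases h : k % (4 : ℕ)
  · exact Or.inl (zpow_zero a)
  · exact absurd (by simpa using hc) ha2
  · exact Or.inr (zpow_natCast a 2)
  · refine absurd ?_ ha2
    norm_cast at hc
    rwa [← pow_mul, show 3 * 2 = 4 + 2 by rfl, pow_add, ha, one_mul] at hc

theorem card_closure_pair_eq_eight [Finite G] (ha : a ^ 4 = 1) (ha2 : a ^ 2 ≠ 1) (hb : b ^ 2 = 1)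
    (hba : b * a * b = a⁻¹) : Nat.card (closure {a, b}) = 8 := by
  have hab : ¬Commute a b := fun h => ha2 <| by
    have : a⁻¹ = a := by rw [← hba, ← h.eq, mul_assoc, ← sq, hb, mul_one]
    rw [sq, mul_eq_one_iff_eq_inv, this]
  have hnorm : b ∈ normalizer (closure {a} : Set G) := by
    refine mem_normalizer_closure_of_conj_mem ?_
    rintro x rfl
    rw [inv_eq_of_sq_eq_one hb, hba]
    exact inv_mem (subset_closure rfl)
  rw [Set.pair_comm, card_closure_insert_of_sq_mem
    (notMem_closure_of_not_commute (by rintro x rfl; rfl) hab) (hb ▸ one_mem _) hnorm,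
    card_closure_singleton_eq_four ha ha2]

theorem card_closure_pair_eq_sixteen [Finite G] (ha : a ^ 4 = 1) (ha2 : a ^ 2 ≠ 1)
    (hb : b ^ 2 = 1) (hc : c ^ 2 = 1) (hc1 : c ≠ 1) (ha2c : a ^ 2 ≠ c) (hab : ⁅a, b⁆ = c)
    (hca : Commute c a) (hcb : Commute c b) : Nat.card (closure {a, b}) = 16 := by
  have hc_mem : c ∈ closure {a, b} := by
    rw [← hab, commutatorElement_def]
    have ha' : a ∈ closure {a, b} := subset_closure (by simp)
    have hb' : b ∈ closure {a, b} := subset_closure (by simp)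
    exact mul_mem (mul_mem (mul_mem ha' hb') (inv_mem ha')) (inv_mem hb')
  have hgen : closure {a, b} = closure (insert b (insert c {a})) := by
    refine le_antisymm (closure_mono (by
      intro x
      simp only [Set.mem_insert_iff, Set.mem_singleton_iff]
      tauto)) ((closure_le _).2 ?_)
    rintro x (rfl | rfl | rfl)
    · exact subset_closure (by simp)
    · exact hc_mem
    · exact subset_closure (by simp)
  have hc_notMem : c ∉ closure {a} := fun h =>
    (eq_one_or_eq_sq_of_mem_zpowers ha ha2 hc (zpowers_eq_closure a ▸ h)).elim hc1
      (fun h => ha2c h.symm)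
  have hc_norm : c ∈ normalizer (closure {a} : Set G) := by
    refine mem_normalizer_closure_of_conj_mem ?_
    rintro x rfl
    rw [hca.eq, mul_inv_cancel_right]
    exact subset_closure rfl
  have hnc : ¬Commute a b := fun h => hc1 (hab ▸ commutatorElement_eq_one_iff_commute.2 h)
  have hb_notMem : b ∉ closure (insert c {a}) :=
    notMem_closure_of_not_commute (by
      simp only [Set.mem_insert_iff, Set.mem_singleton_iff, forall_eq_or_imp, forall_eq]
      exact ⟨hca.symm, Commute.refl a⟩) hnc
  have hb_norm : b ∈ normalizer (closure (insert c {a}) : Set G) := by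
    refine mem_normalizer_closure_of_conj_mem ?_
    have hc' : c ∈ closure (insert c {a}) := subset_closure (by simp)
    have ha' : a ∈ closure (insert c {a}) := subset_closure (by simp)
    simp only [Set.mem_insert_iff, Set.mem_singleton_iff, forall_eq_or_imp, forall_eq]
    have hconj : b * a * b⁻¹ = c⁻¹ * a := by
      rw [← hab, commutatorElement_inv, commutatorElement_def, inv_mul_cancel_right]
    rw [← hcb.eq, mul_inv_cancel_right, hconj]
    exact ⟨hc', mul_mem (inv_mem hc') ha'⟩
  rw [hgen, card_closure_insert_of_sq_mem hb_notMem (hb ▸ one_mem _) hb_norm,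
    card_closure_insert_of_sq_mem hc_notMem (hc ▸ one_mem _) hc_norm,
    card_closure_singleton_eq_four ha ha2]

end Exponent4

section Engel

variable {G : Type*} [Group G]

theorem iterate_commutatorElement_mem_lowerCentralSeries (g x : G) (n : ℕ) :
    (⁅g, ·⁆)^[n] x ∈ (⊤ : Subgroup G).lowerCentralSeries n := by
  induction n with
  | zero => exact mem_top x
  | succ n ih =>
    rw [Function.iterate_succ_apply', Subgroup.lowerCentralSeries_succ, ← commutatorElement_inv]
    exact inv_mem (commutator_mem_commutator ih (mem_top g))

theorem exists_not_commute_commute_commutatorElement [Group.IsNilpotent G] {P : G → Prop}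
    {g s : G} (hP : ∀ x, P x → P ⁅g, x⁆) (hs : P s) (hgs : ¬Commute g s) :
    ∃ x, P x ∧ ¬Commute g x ∧ Commute g ⁅g, x⁆ := by
  classical
  have hex : ∃ n, Commute g ((⁅g, ·⁆)^[n] s) := by
    refine ⟨Group.nilpotencyClass G, ?_⟩
    have h := iterate_commutatorElement_mem_lowerCentralSeries g s (Group.nilpotencyClass G)
    rw [Subgroup.lowerCentralSeries_nilpotencyClass, mem_bot] at h
    rw [h]
    exact Commute.one_right g
  obtain ⟨n, hn⟩ : ∃ n, Nat.find hex = n + 1 :=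
    Nat.exists_eq_add_one_of_ne_zero fun h => hgs (by simpa [h] using Nat.find_spec hex)
  refine ⟨_, Function.Iterate.rec P hs hP n, Nat.find_min hex (by omega), ?_⟩
  simpa only [hn, Function.iterate_succ_apply'] using Nat.find_spec hex

end Engel

theorem involutions_central_of_no_D8_H16_general (G : Type*) [Group G] [Finite G]
    (hp : IsPGroup 2 G) (hexp : Monoid.exponent G = 4)
    -- no subgroup isomorphic to D₈
    (hD8 : ¬ ∃ a b : G, a ^ 4 = 1 ∧ b ^ 2 = 1 ∧ b * a * b = a⁻¹ ∧
      Nat.card (Subgroup.closure {a, b} : Subgroup G) = 8)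
    -- no subgroup isomorphic to H₁₆
    (hH16 : ¬ ∃ a b c : G, a ^ 4 = 1 ∧ b ^ 2 = 1 ∧ c ^ 2 = 1 ∧ ⁅a, b⁆ = c ∧
      ⁅c, a⁆ = 1 ∧ ⁅c, b⁆ = 1 ∧ Nat.card (Subgroup.closure {a, b} : Subgroup G) = 16) :
    ∀ t : G, orderOf t = 2 → t ∈ Subgroup.center G := by
  have hexp4 (z : G) : z ^ 4 = 1 := hexp ▸ Monoid.pow_exponent_eq_one z
  have hcomm (x y : G) (hx : x ^ 2 = 1) (hy : y ^ 2 = 1) : Commute x y := by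
    by_contra hxy
    exact hD8 ⟨x * y, x, hexp4 _, hx, mul_mul_mul_eq_inv_of_sq_eq_one hx hy,
      card_closure_pair_eq_eight (hexp4 _) (sq_mul_ne_one_of_not_commute hx hy hxy) hx
        (mul_mul_mul_eq_inv_of_sq_eq_one hx hy)⟩
  intro t ht
  rw [Subgroup.mem_center_iff]
  by_contra! ⟨g, hgt⟩
  have := hp.isNilpotent
  obtain ⟨s, hs, hgs, hgc⟩ := exists_not_commute_commute_commutatorElement (P := (· ^ 2 = 1))
    (fun x hx => sq_commutatorElement_eq_one hcomm g hx) (ht ▸ pow_orderOf_eq_one t) hgt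
  have hc1 : ⁅g, s⁆ ≠ 1 := fun h => hgs (commutatorElement_eq_one_iff_commute.1 h)
  by_cases hg2 : g ^ 2 = 1
  · exact hgs (hcomm g s hg2 hs)
  by_cases hg2c : ⁅g, s⁆ = g ^ 2
  · have hsgs := mul_mul_eq_inv_of_commutatorElement_eq_sq hs hg2c
    exact hD8 ⟨g, s, hexp4 g, hs, hsgs, card_closure_pair_eq_eight (hexp4 g) hg2 hs hsgs⟩
  · have hcs := commute_commutatorElement_self hcomm g hs
    exact hH16 ⟨g, s, _, hexp4 g, hs, sq_commutatorElement_eq_one hcomm g hs, rfl,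
      commutatorElement_eq_one_iff_commute.2 hgc.symm, commutatorElement_eq_one_iff_commute.2 hcs,
      card_closure_pair_eq_sixteen (hexp4 g) hg2 hs (sq_commutatorElement_eq_one hcomm g hs) hc1
        (Ne.symm hg2c) rfl hgc.symm hcs⟩

theorem involutions_central_of_no_D8_H16 (G : Type*) [Group G] [Finite G]
    (hp : IsPGroup 2 G) (hexp : Monoid.exponent G = 4)
    (hnab : ¬ ∀ x y : G, x * y = y * x)
    -- no subgroup isomorphic to D₈
    (hD8 : ¬ ∃ a b : G, a ^ 4 = 1 ∧ b ^ 2 = 1 ∧ b * a * b = a⁻¹ ∧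
      Nat.card (Subgroup.closure {a, b} : Subgroup G) = 8)
    -- no subgroup isomorphic to H₁₆
    (hH16 : ¬ ∃ a b c : G, a ^ 4 = 1 ∧ b ^ 2 = 1 ∧ c ^ 2 = 1 ∧ ⁅a, b⁆ = c ∧
      ⁅c, a⁆ = 1 ∧ ⁅c, b⁆ = 1 ∧ Nat.card (Subgroup.closure {a, b} : Subgroup G) = 16) :
    ∀ t : G, orderOf t = 2 → t ∈ Subgroup.center G :=
  involutions_central_of_no_D8_H16_general G hp hexp hD8 hH16
end
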